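/- Let A → B be a homomorphism of commutative rings, let M be a free B-module, and let N be an arbitrary B-module. Then there is an isomorphism of A-modules M ⊗_A N ≅ (M ⊗_B N) ⊗_A B, where on the left M and N are regarded as A-modules by restriction of scalars. -/

import Mathlib

/-!
Both sides are `M ⊗[B] X` for a `B`-module `X`: the left one with `X = B ⊗[A] N` (cancelling the
base change), the right one with `X = N ⊗[A] B` (associativity). These two `X` are isomorphic as
`A`-modules via `comm`, but not as `B`-modules, since `B` acts on the first through `B` and on the
second through `N`. For free `M` this suffices: a basis identifies `M ⊗[B] X` with `ι →₀ X`, which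
depends only on the `A`-module `X`.
-/

open TensorProduct

noncomputable def Module.Basis.tensorCongrRight {A B M ι : Type*} [CommSemiring A]
    [CommSemiring B] [Algebra A B] [AddCommMonoid M] [Module B M] [Module A M]
    [IsScalarTower A B M] [DecidableEq ι] (b : Basis ι B M) {X Y : Type*} [AddCommMonoid X]
    [Module B X] [Module A X] [IsScalarTower A B X] [AddCommMonoid Y] [Module B Y] [Module A Y]
    [IsScalarTower A B Y] (e : X ≃ₗ[A] Y) : M ⊗[B] X ≃ₗ[A] M ⊗[B] Y :=
  (equivFinsuppOfBasisLeft b).restrictScalars A ≪≫ₗ Finsupp.mapRange.linearEquiv e ≪≫ₗ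
    ((equivFinsuppOfBasisLeft b).restrictScalars A).symm

theorem free_module_restricted_tensor_product (A B : Type*) [CommRing A] [CommRing B]
    [Algebra A B]
    (M N : Type*) [AddCommGroup M] [Module B M] [AddCommGroup N] [Module B N]
    [Module A M] [IsScalarTower A B M] [Module A N] [IsScalarTower A B N]
    [Module.Free B M] :
    Nonempty ((M ⊗[A] N) ≃ₗ[A] ((M ⊗[B] N) ⊗[A] B)) := by
  classical
  let cancel : (M ⊗[A] N) ≃ₗ[A] (M ⊗[B] (B ⊗[A] N)) :=
    ((AlgebraTensorModule.cancelBaseChange A B B M N).restrictScalars A).symm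
  let swap : (M ⊗[B] (B ⊗[A] N)) ≃ₗ[A] (M ⊗[B] (N ⊗[A] B)) :=
    (Module.Free.chooseBasis B M).tensorCongrRight (TensorProduct.comm A B N)
  let assoc : (M ⊗[B] (N ⊗[A] B)) ≃ₗ[A] ((M ⊗[B] N) ⊗[A] B) :=
    ((AlgebraTensorModule.assoc A B B M N B).restrictScalars A).symm
  exact ⟨cancel ≪≫ₗ swap ≪≫ₗ assoc⟩
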